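/- Let S be a maximal triangular subalgebra of B(H). Then lat(S) is totally ordered: for any p, q ∈ lat(S), either p ≤ q or q ≤ p (equivalently, either pq = p or pq = q). -/

import Mathlib

set_option maxHeartbeats 1000000
set_option synthInstance.maxHeartbeats 400000

open ContinuousLinearMap in
/-- The diagonal `S ∩ S*` of a subalgebra of `B(H)`. -/
def diagonal {H : Type*} [NormedAddCommGroup H] [InnerProductSpace ℂ H] [CompleteSpace H]
    (S : Subalgebra ℂ (H →L[ℂ] H)) : Set (H →L[ℂ] H) :=
  {a | a ∈ S ∧ adjoint a ∈ S}

/-- A set of operators is maximal abelian in `B(H)` if it is commutative and contains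
every operator commuting with all of its members. -/
def IsMaxAbelian {H : Type*} [NormedAddCommGroup H] [InnerProductSpace ℂ H]
    (D : Set (H →L[ℂ] H)) : Prop :=
  (∀ a ∈ D, ∀ b ∈ D, a * b = b * a) ∧
  (∀ b : H →L[ℂ] H, (∀ a ∈ D, a * b = b * a) → b ∈ D)

/-- A (unital) subalgebra of `B(H)` is triangular if its diagonal `S ∩ S*` is
maximal abelian in `B(H)`. -/
def IsTriangular {H : Type*} [NormedAddCommGroup H] [InnerProductSpace ℂ H] [CompleteSpace H]
    (S : Subalgebra ℂ (H →L[ℂ] H)) : Prop :=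
  IsMaxAbelian (diagonal S)

/-- `S` is maximal triangular if it is triangular and not properly contained in any
other triangular subalgebra. -/
def IsMaxTriangular {H : Type*} [NormedAddCommGroup H] [InnerProductSpace ℂ H] [CompleteSpace H]
    (S : Subalgebra ℂ (H →L[ℂ] H)) : Prop :=
  IsTriangular S ∧ ∀ T : Subalgebra ℂ (H →L[ℂ] H), IsTriangular T → S ≤ T → S = T

open ContinuousLinearMap in
/-- `p ∈ lat S`: `p` is an orthogonal projection with `a p = p a p` for all `a ∈ S`. -/
def InLat {H : Type*} [NormedAddCommGroup H] [InnerProductSpace ℂ H] [CompleteSpace H]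
    (S : Subalgebra ℂ (H →L[ℂ] H)) (p : H →L[ℂ] H) : Prop :=
  p * p = p ∧ adjoint p = p ∧ ∀ a ∈ S, a * p = p * a * p


/-!
If `p ∈ lat S` and `S` is maximal triangular, then `p` lies in the diagonal, and adjoining the
whole corner `p B(H) (1 - p)` to `S` gives an algebra whose diagonal is still that of `S`, hence a
triangular extension of `S`; so `p B(H) (1 - p) ⊆ S`. For a second `q ∈ lat S` this forces
`(1 - q) p B(H) (1 - p) q = 0`, and since `B(H)` is a prime ring, `(1 - q) p = 0` or `(1 - p) q = 0`.
-/

open ContinuousLinearMap InnerProductSpace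

theorem ContinuousLinearMap.eq_zero_or_eq_zero_of_forall_mul_mul_eq_zero {𝕜 E : Type*} [RCLike 𝕜]
    [NormedAddCommGroup E] [InnerProductSpace 𝕜 E] {a c : E →L[𝕜] E}
    (h : ∀ b, a * b * c = 0) : a = 0 ∨ c = 0 := by
  by_contra! hac
  obtain ⟨u, hu⟩ : ∃ u, a u ≠ 0 := not_forall.mp fun h' => hac.1 (ext h')
  obtain ⟨w, hw⟩ : ∃ w, c w ≠ 0 := not_forall.mp fun h' => hac.2 (ext h')
  have h0 := congr($(h (rankOne 𝕜 u (c w))) w)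
  simp only [mul_apply_eq_comp, rankOne_apply, map_smul, zero_apply] at h0
  exact smul_ne_zero (inner_self_ne_zero.mpr hw) hu h0

namespace Subalgebra

variable {R A : Type*}

section Semiring

variable [CommSemiring R] [Semiring A] [Algebra R A]

/-- `S + p A (1 - p)`: for idempotent `p`, the condition `p * j = j ∧ j * p = 0` says exactly
that `j ∈ p A (1 - p)`. -/
def adjoinCorner (S : Subalgebra R A) (p : A) (hp : ∀ s ∈ S, s * p = p * s * p) :
    Subalgebra R A where
  carrier := {a | ∃ s ∈ S, ∃ j, p * j = j ∧ j * p = 0 ∧ a = s + j}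
  add_mem' := by
    rintro _ _ ⟨s, hs, j, hpj, hjp, rfl⟩ ⟨s', hs', j', hpj', hjp', rfl⟩
    refine ⟨s + s', add_mem hs hs', j + j', by rw [mul_add, hpj, hpj'], by
      rw [add_mul, hjp, hjp', add_zero], by abel⟩
  mul_mem' := by
    rintro _ _ ⟨s, hs, j, hpj, hjp, rfl⟩ ⟨s', hs', j', hpj', hjp', rfl⟩
    have hjj' : j * j' = 0 := by rw [← hpj', ← mul_assoc, hjp, zero_mul]
    refine ⟨s * s', mul_mem hs hs', s * j' + j * s', ?_, ?_, ?_⟩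
    · rw [mul_add, ← mul_assoc, ← mul_assoc, hpj, ← hpj', ← mul_assoc, ← mul_assoc, ← hp s hs]
    · rw [add_mul, mul_assoc, hjp', mul_zero, zero_add, mul_assoc, hp s' hs', ← mul_assoc,
        ← mul_assoc, hjp, zero_mul, zero_mul]
    · rw [add_mul, mul_add, mul_add, hjj', add_zero, add_assoc]
  algebraMap_mem' r := ⟨algebraMap R A r, S.algebraMap_mem r, 0, mul_zero p, zero_mul p,
    (add_zero _).symm⟩

theorem le_adjoinCorner (S : Subalgebra R A) (p : A) (hp : ∀ s ∈ S, s * p = p * s * p) :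
    S ≤ S.adjoinCorner p hp :=
  fun s hs => ⟨s, hs, 0, mul_zero p, zero_mul p, (add_zero s).symm⟩

theorem mem_adjoinCorner_of_mul {S : Subalgebra R A} {p : A} (hp : ∀ s ∈ S, s * p = p * s * p)
    {j : A} (hpj : p * j = j) (hjp : j * p = 0) : j ∈ S.adjoinCorner p hp :=
  ⟨0, zero_mem S, j, hpj, hjp, (zero_add j).symm⟩

end Semiring

theorem mem_of_mem_adjoinCorner_of_star_mem [CommRing R] [Ring A] [StarRing A] [Algebra R A]
    {S : Subalgebra R A} {p : A} (hp : ∀ s ∈ S, s * p = p * s * p) (hpS : p ∈ S)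
    (hp_star : star p = p) {a : A} (ha : a ∈ S.adjoinCorner p hp)
    (ha_star : star a ∈ S.adjoinCorner p hp) : a ∈ S := by
  obtain ⟨s, hs, j, hpj, hjp, rfl⟩ := ha
  obtain ⟨t, ht, k, -, hkp, hst⟩ := ha_star
  have hj_star_p : star j * p = star j := by
    simpa only [star_mul, hp_star] using congr(star $hpj)
  have hp_j_star : p * star j = 0 := by
    simpa only [star_mul, hp_star, star_zero] using congr(star $hjp)
  -- `star j ∈ (1 - p) A p` survives compression by `p` on the right and dies on the left
  have hright : star s * p + star j = t * p := by
    simpa only [star_add, add_mul, hj_star_p, hkp, add_zero] using congr($hst * p)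
  have hleft : p * star s * p = t * p := by
    simpa only [mul_add, hp_j_star, add_zero, ← mul_assoc, ← hp t ht] using congr(p * $hright)
  have hj : j = p * s * p - p * s := by
    have h := congr(star $(eq_sub_of_add_eq' hright))
    simpa only [star_star, ← hleft, star_sub, star_mul, hp_star, mul_assoc] using h
  rw [hj]
  exact add_mem hs (sub_mem (mul_mem (mul_mem hpS hs) hpS) (mul_mem hpS hs))

end Subalgebra

section Operators

variable {H : Type*} [NormedAddCommGroup H] [InnerProductSpace ℂ H] [CompleteSpace H]
  {S : Subalgebra ℂ (H →L[ℂ] H)} {p : H →L[ℂ] H}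

theorem InLat.star_eq (hp : InLat S p) : star p = p := by
  rw [star_eq_adjoint, hp.2.1]

theorem InLat.mem_diagonal (hD : IsMaxAbelian (diagonal S)) (hp : InLat S p) :
    p ∈ diagonal S := by
  refine hD.2 p fun a ⟨haS, ha_adj⟩ => ?_
  have h := congr(star $(hp.2.2 _ ha_adj))
  simp only [star_mul, star_eq_adjoint, adjoint_adjoint, hp.star_eq, mul_assoc] at h
  rw [hp.2.2 a haS, mul_assoc, h]

theorem diagonal_adjoinCorner (hpS : p ∈ S) (hp_adj : adjoint p = p)
    (hp : ∀ s ∈ S, s * p = p * s * p) : diagonal (S.adjoinCorner p hp) = diagonal S := by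
  have hp_star : star p = p := by rw [star_eq_adjoint, hp_adj]
  ext a
  constructor
  · rintro ⟨ha, ha_adj⟩
    refine ⟨S.mem_of_mem_adjoinCorner_of_star_mem hp hpS hp_star ha
      (by rwa [star_eq_adjoint]), S.mem_of_mem_adjoinCorner_of_star_mem hp hpS hp_star ha_adj
      (by rwa [star_eq_adjoint, adjoint_adjoint])⟩
  · rintro ⟨ha, ha_adj⟩
    exact ⟨S.le_adjoinCorner p hp ha, S.le_adjoinCorner p hp ha_adj⟩

theorem IsMaxTriangular.mul_mul_one_sub_mem (hS : IsMaxTriangular S) (hp : InLat S p)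
    (b : H →L[ℂ] H) : p * b * (1 - p) ∈ S := by
  have hpS : p ∈ S := (hp.mem_diagonal hS.1).1
  have htri : IsTriangular (S.adjoinCorner p hp.2.2) := by
    rw [IsTriangular, diagonal_adjoinCorner hpS hp.2.1]
    exact hS.1
  rw [hS.2 _ htri (S.le_adjoinCorner p hp.2.2)]
  refine Subalgebra.mem_adjoinCorner_of_mul hp.2.2 ?_ ?_
  · rw [← mul_assoc, ← mul_assoc, hp.1]
  · rw [mul_assoc, sub_mul, one_mul, hp.1, sub_self, mul_zero]

theorem InLat.one_sub_mul_mul_eq_zero (hp : InLat S p) {a : H →L[ℂ] H} (ha : a ∈ S) :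
    (1 - p) * a * p = 0 := by
  rw [sub_mul, sub_mul, one_mul, ← hp.2.2 a ha, sub_self]

end Operators

/-- If `S` is maximal triangular then `lat(S)` is totally ordered: for `p, q ∈ lat(S)`
either `p q = p` (i.e. `p ≤ q`) or `p q = q` (i.e. `q ≤ p`). -/
theorem lat_totallyOrdered {H : Type*} [NormedAddCommGroup H] [InnerProductSpace ℂ H]
    [CompleteSpace H] {S : Subalgebra ℂ (H →L[ℂ] H)} (hS : IsMaxTriangular S)
    {p q : H →L[ℂ] H} (hp : InLat S p) (hq : InLat S q) :
    p * q = p ∨ p * q = q := by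
  have hprime : ∀ b, (1 - q) * p * b * ((1 - p) * q) = 0 := fun b => by
    simpa only [mul_assoc] using hq.one_sub_mul_mul_eq_zero (hS.mul_mul_one_sub_mem hp b)
  rcases eq_zero_or_eq_zero_of_forall_mul_mul_eq_zero hprime with h | h
  · left
    have hqp : q * p = p := by rwa [sub_mul, one_mul, sub_eq_zero, eq_comm] at h
    simpa only [star_mul, hp.star_eq, hq.star_eq] using congr(star $hqp)
  · right
    rwa [sub_mul, one_mul, sub_eq_zero, eq_comm] at h
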